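/- Let α,β∈P̂ₙ. If there is a data tree T and nodes x,y of T such that T,x,y⊨α and T,x,y⊨β, then α=β (the two path expressions are syntactically identical). -/

import Mathlib

attribute [local instance] Classical.propDecidable

mutual
/-- Path expressions of `XPath↓⁻` (no inequality tests in the language). -/
inductive PathExpr (A : Type) : Type
  | eps : PathExpr A
  | down : PathExpr A
  | test : NodeExpr A → PathExpr A
  | comp : PathExpr A → PathExpr A → PathExpr A
  | union : PathExpr A → PathExpr A → PathExpr A

/-- Node expressions of `XPath↓⁻` (no inequality tests in the language). -/
inductive NodeExpr (A : Type) : Type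
  | lab : A → NodeExpr A
  | neg : NodeExpr A → NodeExpr A
  | conj : NodeExpr A → NodeExpr A → NodeExpr A
  | diam : PathExpr A → NodeExpr A
  | eqTest : PathExpr A → PathExpr A → NodeExpr A
end

namespace XPathMinus

variable {A : Type}

/-- Defined disjunction `φ ∨ ψ := ¬(¬φ ∧ ¬ψ)`. -/
def nOr (φ ψ : NodeExpr A) : NodeExpr A := .neg (.conj (.neg φ) (.neg ψ))

/-- `⊤ := ⟨ε⟩`. -/
def topN : NodeExpr A := .diam .eps

/-- `⊥ := ¬⊤`. -/
def botN : NodeExpr A := .neg topN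

/-- `⊥̄ := [¬⟨ε⟩]`. -/
def botP : PathExpr A := .test (.neg (.diam .eps))

def bigOr (l : List (NodeExpr A)) : NodeExpr A := l.foldr nOr botN

def bigUnion (l : List (PathExpr A)) : PathExpr A := l.foldr PathExpr.union botP

/-- A data tree: a tree (connected, acyclic, unique parents except the root)
whose nodes carry labels from `A`, together with a partition of the nodes
(presented as an equivalence relation `eqd`). -/
structure DataTree (A : Type) where
  X : Type
  child : X → X → Prop
  root : X
  label : X → A
  eqd : X → X → Prop
  eqd_equiv : Equivalence eqd
  parent_unique : ∀ ⦃x y z : X⦄, child x z → child y z → x = y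
  root_no_parent : ∀ x : X, ¬ child x root
  reach : ∀ x : X, Relation.ReflTransGen child root x
  acyclic : ∀ x : X, ¬ Relation.TransGen child x x

mutual
/-- Semantics of path expressions. -/
def psem (T : DataTree A) : PathExpr A → T.X → T.X → Prop
  | .eps, x, y => x = y
  | .down, x, y => T.child x y
  | .test φ, x, y => x = y ∧ nsem T φ x
  | .comp α β, x, z => ∃ y, psem T α x y ∧ psem T β y z
  | .union α β, x, y => psem T α x y ∨ psem T β x y

/-- Semantics of node expressions. -/
def nsem (T : DataTree A) : NodeExpr A → T.X → Prop
  | .lab a, x => T.label x = a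
  | .neg φ, x => ¬ nsem T φ x
  | .conj φ ψ, x => nsem T φ x ∧ nsem T ψ x
  | .diam α, x => ∃ y, psem T α x y
  | .eqTest α β, x => ∃ y z, psem T α x y ∧ psem T β x z ∧ T.eqd y z
end

/-- Semantic equivalence of node expressions: same denotation in every data tree. -/
def nodeValid (φ ψ : NodeExpr A) : Prop :=
  ∀ (T : DataTree A) (x : T.X), nsem T φ x ↔ nsem T ψ x

/-- Semantic equivalence of path expressions: same denotation in every data tree. -/
def pathValid (α β : PathExpr A) : Prop :=
  ∀ (T : DataTree A) (x y : T.X), psem T α x y ↔ psem T β x y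

mutual
/-- Derivability of node equivalences in the axiomatic system `XP⁻`. -/
inductive NDer {A : Type} [Fintype A] : NodeExpr A → NodeExpr A → Prop
  | refl (φ : NodeExpr A) : NDer φ φ
  | symm {φ ψ : NodeExpr A} : NDer φ ψ → NDer ψ φ
  | trans {φ ψ ρ : NodeExpr A} : NDer φ ψ → NDer ψ ρ → NDer φ ρ
  | congr_neg {φ ψ : NodeExpr A} : NDer φ ψ → NDer (.neg φ) (.neg ψ)
  | congr_conj {φ φ' ψ ψ' : NodeExpr A} :
      NDer φ φ' → NDer ψ ψ' → NDer (.conj φ ψ) (.conj φ' ψ')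
  | congr_diam {α β : PathExpr A} : PDer α β → NDer (.diam α) (.diam β)
  | congr_eqTest {α α' β β' : PathExpr A} :
      PDer α α' → PDer β β' → NDer (.eqTest α β) (.eqTest α' β')
  | lbAx1 : NDer topN (bigOr ((Finset.univ : Finset A).toList.map NodeExpr.lab))
  | lbAx2 {a b : A} : a ≠ b → NDer botN (.conj (.lab a) (.lab b))
  | ndAx1 (φ ψ : NodeExpr A) :
      NDer φ (nOr (.neg (nOr (.neg φ) ψ)) (.neg (nOr (.neg φ) (.neg ψ))))
  | ndAx2 (φ : NodeExpr A) : NDer (.diam (.test φ)) φ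
  | ndAx3 (α β : PathExpr A) : NDer (.diam (.union α β)) (nOr (.diam α) (.diam β))
  | ndAx4 (α β : PathExpr A) : NDer (.diam (.comp α β)) (.diam (.comp α (.test (.diam β))))
  | eqAx1 (α β : PathExpr A) : NDer (.eqTest α β) (.eqTest β α)
  | eqAx2 (α β γ : PathExpr A) :
      NDer (.eqTest (.union α β) γ) (nOr (.eqTest α γ) (.eqTest β γ))
  | eqAx3 (φ : NodeExpr A) (α β : PathExpr A) :
      NDer (.conj φ (.eqTest α β)) (.eqTest (.comp (.test φ) α) β)
  | eqAx4 (α β : PathExpr A) : NDer (nOr (.eqTest α β) (.diam α)) (.diam α)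
  | eqAx5 (γ α β : PathExpr A) :
      NDer (nOr (.diam (.comp γ (.test (.eqTest α β)))) (.eqTest (.comp γ α) (.comp γ β)))
        (.eqTest (.comp γ α) (.comp γ β))
  | eqAx6 (α : PathExpr A) : NDer (.eqTest α α) (.diam α)
  | eqAx7 (α β : PathExpr A) :
      NDer (nOr (.conj (.eqTest α .eps) (.eqTest β .eps)) (.eqTest α β)) (.eqTest α β)
  | eqAx8 (α β γ : PathExpr A) :
      NDer (nOr (.eqTest α (.comp β (.test (.eqTest .eps γ)))) (.eqTest α (.comp β γ)))
        (.eqTest α (.comp β γ))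

/-- Derivability of path equivalences in the axiomatic system `XP⁻`. -/
inductive PDer {A : Type} [Fintype A] : PathExpr A → PathExpr A → Prop
  | refl (α : PathExpr A) : PDer α α
  | symm {α β : PathExpr A} : PDer α β → PDer β α
  | trans {α β γ : PathExpr A} : PDer α β → PDer β γ → PDer α γ
  | congr_test {φ ψ : NodeExpr A} : NDer φ ψ → PDer (.test φ) (.test ψ)
  | congr_comp {α α' β β' : PathExpr A} :
      PDer α α' → PDer β β' → PDer (.comp α β) (.comp α' β')
  | congr_union {α α' β β' : PathExpr A} :
      PDer α α' → PDer β β' → PDer (.union α β) (.union α' β')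
  | prAx1 (α β : PathExpr A) : PDer (.comp (.comp α (.test (.neg (.diam β)))) β) botP
  | prAx2 : PDer (.test topN) (.eps : PathExpr A)
  | prAx3 (φ ψ : NodeExpr A) : PDer (.test (nOr φ ψ)) (.union (.test φ) (.test ψ))
  | isAx1 (α β γ : PathExpr A) : PDer (.union (.union α β) γ) (.union α (.union β γ))
  | isAx2 (α β : PathExpr A) : PDer (.union α β) (.union β α)
  | isAx3 (α : PathExpr A) : PDer (.union α α) α
  | isAx4 (α β γ : PathExpr A) : PDer (.comp α (.comp β γ)) (.comp (.comp α β) γ)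
  | isAx5l (α : PathExpr A) : PDer (.comp .eps α) α
  | isAx5r (α : PathExpr A) : PDer (.comp α .eps) α
  | isAx6l (α β γ : PathExpr A) :
      PDer (.comp α (.union β γ)) (.union (.comp α β) (.comp α γ))
  | isAx6r (α β γ : PathExpr A) :
      PDer (.comp (.union α β) γ) (.union (.comp α γ) (.comp β γ))
  | isAx7 (α : PathExpr A) : PDer (.union botP α) α
end

/-- A node expression is `XP⁻`-consistent if it is not provably equivalent to `⊥`. -/
def NConsistent [Fintype A] (φ : NodeExpr A) : Prop := ¬ NDer φ botN

/-- A path expression is `XP⁻`-consistent if it is not provably equivalent to `⊥̄`. -/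
def PConsistent [Fintype A] (α : PathExpr A) : Prop := ¬ PDer α botP

/-- The normal form `a ∧ ⋀_{d ∈ C} d ∧ ⋀_{d ∈ D∖C} ¬d`, built along the canonical listing `D`. -/
noncomputable def mkNF (a : A) (C D : List (NodeExpr A)) : NodeExpr A :=
  D.foldl (fun acc d => .conj acc (if d ∈ C then d else .neg d)) (.lab a)

/-- The canonical lists of normal-form path expressions (first component)
and normal-form node expressions (second component) at each level. -/
noncomputable def NF (A : Type) [Fintype A] : ℕ → List (PathExpr A) × List (NodeExpr A)
  | 0 =>
    ([.eps],
      (Finset.univ : Finset A).toList.map fun a =>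
        NodeExpr.conj (.lab a) (.eqTest .eps .eps))
  | n+1 =>
    let P := (NF A n).1
    let N := (NF A n).2
    let P' : List (PathExpr A) :=
      .eps :: N.flatMap fun ψ => P.map fun β => PathExpr.comp .down (.comp (.test ψ) β)
    let D : List (NodeExpr A) :=
      P'.flatMap fun α => P'.map fun β => NodeExpr.eqTest α β
    let cands : List (NodeExpr A) :=
      D.sublists.flatMap fun C => (Finset.univ : Finset A).toList.map fun a => mkNF a C D
    (P', cands.filter fun φ => decide (NConsistent φ))

/-- `P̂ₙ`: normal-form path expressions of level `n`. -/
noncomputable def Pnf (A : Type) [Fintype A] (n : ℕ) : Set (PathExpr A) :=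
  {α | α ∈ (NF A n).1}

/-- `N̂ₙ`: normal-form node expressions of level `n`. -/
noncomputable def Nnf (A : Type) [Fintype A] (n : ℕ) : Set (NodeExpr A) :=
  {φ | φ ∈ (NF A n).2}

/-- `D̂ₙ`: data-aware diamonds between normal-form paths of level `n`. -/
noncomputable def Dnf (A : Type) [Fintype A] (n : ℕ) : Set (NodeExpr A) :=
  {φ | ∃ α ∈ Pnf A n, ∃ β ∈ Pnf A n, φ = NodeExpr.eqTest α β}

/-- The conjuncts of a node expression (flattening `∧`). -/
def conjuncts : NodeExpr A → List (NodeExpr A)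
  | .conj φ ψ => conjuncts φ ++ conjuncts ψ
  | φ => [φ]

/-- `δ` is a conjunct of `ψ`. -/
def IsConjunct (δ ψ : NodeExpr A) : Prop := δ ∈ conjuncts ψ

/-- Length of a path expression. -/
def plen : PathExpr A → ℕ
  | .eps => 0
  | .down => 1
  | .test _ => 0
  | .comp α β => plen α + plen β
  | .union α β => max (plen α) (plen β)

mutual
/-- Downward depth of a node expression. -/
def ndd : NodeExpr A → ℕ
  | .lab _ => 0
  | .neg φ => ndd φ
  | .conj φ ψ => max (ndd φ) (ndd ψ)
  | .diam α => pdd α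
  | .eqTest α β => max (pdd α) (pdd β)

/-- Downward depth of a path expression. -/
def pdd : PathExpr A → ℕ
  | .eps => 0
  | .down => 1
  | .test φ => ndd φ
  | .comp α β => max (max (pdd α) (pdd β)) (plen α + pdd β)
  | .union α β => max (pdd α) (pdd β)
end

/-- The path `↓[ψ]α`. -/
def dPath (ψ : NodeExpr A) (α : PathExpr A) : PathExpr A :=
  .comp .down (.comp (.test ψ) α)

/-- A path expression whose leftmost symbol is `↓`. -/
def startsWithDown : PathExpr A → Prop
  | .down => True
  | .comp α _ => startsWithDown α
  | _ => False

end XPathMinus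

/-!
Path expressions only move downward, so in a tree the first step of a normal form `↓[ψ]γ`
from `x` to `y` is forced: it is the unique child of `x` lying above `y`. Normal-form node
expressions of one level are pairwise exclusive, since each one fixes the label and the truth
value of every test in the common list `D̂ₙ`; hence `ψ` is determined by that child, and `γ` by
induction on the level.
-/

namespace XPathMinus

variable {A : Type}

namespace DataTree

variable (T : DataTree A)

theorem reflTransGen_total {z z' y : T.X} (hz : Relation.ReflTransGen T.child z y)
    (hz' : Relation.ReflTransGen T.child z' y) :
    Relation.ReflTransGen T.child z z' ∨ Relation.ReflTransGen T.child z' z := by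
  have hU : Relator.RightUnique (Function.swap T.child) := fun _ _ _ h h' => T.parent_unique h h'
  rw [← Relation.reflTransGen_swap] at hz hz'
  simpa only [Relation.reflTransGen_swap, or_comm] using
    Relation.ReflTransGen.total_of_right_unique hU hz hz'

theorem eq_of_child_of_reflTransGen {x z z' : T.X} (hz : T.child x z) (hz' : T.child x z')
    (hzz' : Relation.ReflTransGen T.child z z') : z = z' := by
  rcases hzz'.cases_tail with rfl | ⟨p, hzp, hpz'⟩
  · rfl
  · obtain rfl : p = x := T.parent_unique hpz' hz'
    exact absurd (Relation.TransGen.head' hz hzp) (T.acyclic p)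

theorem child_unique_of_reflTransGen {x y z z' : T.X}
    (hz : T.child x z) (hzy : Relation.ReflTransGen T.child z y)
    (hz' : T.child x z') (hzy' : Relation.ReflTransGen T.child z' y) : z = z' := by
  rcases T.reflTransGen_total hzy hzy' with h | h
  · exact T.eq_of_child_of_reflTransGen hz hz' h
  · exact (T.eq_of_child_of_reflTransGen hz' hz h).symm

end DataTree

theorem psem_reflTransGen (T : DataTree A) :
    ∀ (α : PathExpr A) {x y : T.X}, psem T α x y → Relation.ReflTransGen T.child x y
  | .eps, _, _, rfl => .refl
  | .down, _, _, h => .single h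
  | .test _, _, _, ⟨rfl, _⟩ => .refl
  | .comp α β, _, _, ⟨_, hα, hβ⟩ => (psem_reflTransGen T α hα).trans (psem_reflTransGen T β hβ)
  | .union α _, _, _, .inl h => psem_reflTransGen T α h
  | .union _ β, _, _, .inr h => psem_reflTransGen T β h

theorem psem_dPath {T : DataTree A} {ψ : NodeExpr A} {γ : PathExpr A} {x y : T.X} :
    psem T (dPath ψ γ) x y ↔ ∃ z, T.child x z ∧ nsem T ψ z ∧ psem T γ z y := by
  simp only [dPath, psem]
  constructor
  · rintro ⟨z, hxz, _, ⟨rfl, hψ⟩, hγ⟩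
    exact ⟨z, hxz, hψ, hγ⟩
  · rintro ⟨z, hxz, hψ, hγ⟩
    exact ⟨z, hxz, z, ⟨rfl, hψ⟩, hγ⟩

theorem not_psem_dPath_self {T : DataTree A} {ψ : NodeExpr A} {γ : PathExpr A} {x : T.X} :
    ¬ psem T (dPath ψ γ) x x := by
  rw [psem_dPath]
  rintro ⟨z, hxz, -, hγ⟩
  exact T.acyclic x (Relation.TransGen.head' hxz (psem_reflTransGen T γ hγ))

theorem nsem_foldl_conj (T : DataTree A) (f : NodeExpr A → NodeExpr A) (x : T.X) :
    ∀ (D : List (NodeExpr A)) (init : NodeExpr A),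
      nsem T (D.foldl (fun acc d => .conj acc (f d)) init) x ↔
        nsem T init x ∧ ∀ d ∈ D, nsem T (f d) x
  | [], _ => by simp
  | d :: D, init => by
    simp only [List.foldl_cons, nsem_foldl_conj T f x D, nsem, List.forall_mem_cons, and_assoc]

theorem nsem_mkNF {T : DataTree A} {x : T.X} {a : A} {C D : List (NodeExpr A)} :
    nsem T (mkNF a C D) x ↔ T.label x = a ∧ ∀ d ∈ D, (nsem T d x ↔ d ∈ C) := by
  rw [mkNF, nsem_foldl_conj]
  refine and_congr Iff.rfl (forall₂_congr fun d _ => ?_)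
  split_ifs with hd <;> simp [nsem, hd]

theorem mkNF_congr {a : A} {C C' D : List (NodeExpr A)} (h : ∀ d ∈ D, d ∈ C ↔ d ∈ C') :
    mkNF a C D = mkNF a C' D :=
  List.foldl_ext _ _ _ fun _ d hd => by simp only [h d hd]

theorem mkNF_eq_of_nsem {T : DataTree A} {x : T.X} {a b : A} {C C' D : List (NodeExpr A)}
    (h : nsem T (mkNF a C D) x) (h' : nsem T (mkNF b C' D) x) :
    mkNF a C D = mkNF b C' D := by
  obtain ⟨rfl, hC⟩ := nsem_mkNF.1 h
  obtain ⟨rfl, hC'⟩ := nsem_mkNF.1 h'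
  exact mkNF_congr fun d hd => (hC d hd).symm.trans (hC' d hd)

variable [Fintype A]

theorem Pnf_zero : Pnf A 0 = {.eps} := by
  ext α
  simp [Pnf, NF]

theorem mem_Pnf_succ {n : ℕ} {α : PathExpr A} :
    α ∈ Pnf A (n + 1) ↔ α = .eps ∨ ∃ ψ ∈ Nnf A n, ∃ γ ∈ Pnf A n, α = dPath ψ γ := by
  simp only [Pnf, Nnf, NF, List.mem_cons, List.mem_flatMap, List.mem_map, dPath]
  grind

theorem mem_Nnf_zero {φ : NodeExpr A} :
    φ ∈ Nnf A 0 ↔ ∃ a, φ = .conj (.lab a) (.eqTest .eps .eps) := by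
  simp [Nnf, NF, eq_comm]

theorem exists_mkNF_of_mem_Nnf_succ (n : ℕ) :
    ∃ D : List (NodeExpr A), ∀ φ ∈ Nnf A (n + 1), ∃ a C, φ = mkNF a C D := by
  refine ⟨(NF A (n + 1)).1.flatMap fun α => (NF A (n + 1)).1.map (NodeExpr.eqTest α),
    fun φ hφ => ?_⟩
  simp only [Nnf, NF, List.mem_filter, List.mem_flatMap, List.mem_map] at hφ
  obtain ⟨⟨C, -, a, -, rfl⟩, -⟩ := hφ
  exact ⟨a, C, rfl⟩

theorem eq_of_mem_Nnf_of_nsem {n : ℕ} {φ ψ : NodeExpr A} (hφ : φ ∈ Nnf A n) (hψ : ψ ∈ Nnf A n)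
    {T : DataTree A} {x : T.X} (h : nsem T φ x) (h' : nsem T ψ x) : φ = ψ := by
  cases n with
  | zero =>
    obtain ⟨a, rfl⟩ := mem_Nnf_zero.1 hφ
    obtain ⟨b, rfl⟩ := mem_Nnf_zero.1 hψ
    rw [← h.1, ← h'.1]
  | succ n =>
    obtain ⟨D, hD⟩ := exists_mkNF_of_mem_Nnf_succ (A := A) n
    obtain ⟨a, C, rfl⟩ := hD φ hφ
    obtain ⟨b, C', rfl⟩ := hD ψ hψ
    exact mkNF_eq_of_nsem h h'

end XPathMinus

/-- Two normal-form paths of the same level satisfied by the same pair of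
nodes are syntactically identical. -/
theorem XPathMinus.nf_path_unique {A : Type} [Fintype A] (hA : 1 < Fintype.card A)
    (n : ℕ) (α β : PathExpr A) (hα : α ∈ Pnf A n) (hβ : β ∈ Pnf A n)
    (T : DataTree A) (x y : T.X)
    (h1 : psem T α x y) (h2 : psem T β x y) :
    α = β := by
  induction n generalizing α β x with
  | zero => rw [Pnf_zero] at hα hβ; rw [hα, hβ]
  | succ n ih =>
    rcases mem_Pnf_succ.1 hα with rfl | ⟨ψ, hψ, γ, hγ, rfl⟩ <;>
      rcases mem_Pnf_succ.1 hβ with rfl | ⟨ψ', hψ', γ', hγ', rfl⟩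
    · rfl
    · cases h1; exact absurd h2 not_psem_dPath_self
    · cases h2; exact absurd h1 not_psem_dPath_self
    · obtain ⟨z, hxz, hψz, hγz⟩ := psem_dPath.1 h1
      obtain ⟨z', hxz', hψz', hγz'⟩ := psem_dPath.1 h2
      obtain rfl : z = z' := T.child_unique_of_reflTransGen hxz (psem_reflTransGen T γ hγz)
        hxz' (psem_reflTransGen T γ' hγz')
      rw [eq_of_mem_Nnf_of_nsem hψ hψ' hψz hψz', ih γ γ' hγ hγ' z hγz hγz']
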